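/- arXiv:1902.02736 — 3 statements merged into one kernel-verified Lean document; each statement's English description precedes it below -/
import Mathlib

section
/- Fix an abelian group A, integers n > m ≥ 0, and ordinals ξ < η such that ξ is a successor ordinal or cf(ξ) < ℵ_m. Suppose Φ = {φ_β̄ | β̄ ∈ [η]^n} is an n-trivial A-valued family of height η. Then any n-trivialization Ψ of the restriction Φ↾ξ = {φ_β̄ | β̄ ∈ [ξ]^n} extends to an n-trivialization Ψ' of Φ (that is, for n > 1, ψ'_β̄ = ψ_β̄ for all β̄ ∈ [ξ]^{n−1}, and for n = 1 the trivializing function ψ' : η → A satisfies ψ'↾ξ = ψ). -/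
noncomputable section
open Ordinal Set

/-- The alternating sum `Σ_{i ≤ n} (-1)^i Ψ (β^i) (ξ)`, where `β^i` is the tuple `β` with its
`i`-th coordinate deleted. -/
def altSum {A : Type*} [AddCommGroup A] {n : ℕ}
    (Ψ : (Fin n → Ordinal.{0}) → Ordinal.{0} → A) (β : Fin (n + 1) → Ordinal.{0})
    (ξ : Ordinal.{0}) : A :=
  ∑ i : Fin (n + 1), ((-1 : ℤ) ^ (i : ℕ)) • Ψ (β ∘ i.succAbove) ξ

/-- `Φ` codes an `n`-coherent `A`-valued family of height `δ`: writing `φ_β̄ = Φ β̄` (a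
function read on `Iio (β̄ 0)`) for increasing `n`-tuples `β̄` from `δ`, one has
`Σ_{i ≤ n} (-1)^i φ_{β̄^i} =* 0` (i.e. at all but finitely many arguments) for every
increasing `(n+1)`-tuple `β̄` from `δ`.  For `n = 0`, `Φ` codes a single function which is
required to have finite support below every `α < δ`. -/
def NCoherent {A : Type*} [AddCommGroup A] {n : ℕ} (δ : Ordinal.{0})
    (Φ : (Fin n → Ordinal.{0}) → Ordinal.{0} → A) : Prop :=
  ∀ β : Fin (n + 1) → Ordinal, StrictMono β → (∀ i, β i < δ) →
    {ξ : Ordinal | ξ < β 0 ∧ altSum Φ β ξ ≠ 0}.Finite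

/-- `Ψ` is an `(n+1)`-trivialization of the `(n+1)`-dimensional family `Φ` of height `δ`:
`Σ_{i ≤ n} (-1)^i ψ_{β̄^i} =* φ_β̄` for every increasing `(n+1)`-tuple `β̄` from `δ`.
For `n = 0` this says exactly that the single function `ψ = Ψ ∅` satisfies
`ψ ↾ β =* φ_β` for all `β < δ`. -/
def IsNTrivialization {A : Type*} [AddCommGroup A] {n : ℕ} (δ : Ordinal.{0})
    (Φ : (Fin (n + 1) → Ordinal.{0}) → Ordinal.{0} → A)
    (Ψ : (Fin n → Ordinal.{0}) → Ordinal.{0} → A) : Prop :=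
  ∀ β : Fin (n + 1) → Ordinal, StrictMono β → (∀ i, β i < δ) →
    {ξ : Ordinal | ξ < β 0 ∧ altSum Ψ β ξ ≠ Φ β ξ}.Finite

/-- `n`-triviality of an `n`-dimensional family of height `δ`: for `n = 0`, finite support;
for `n ≥ 1`, the existence of an `n`-trivialization. -/
def NTrivial {A : Type*} [AddCommGroup A] :
    ∀ {n : ℕ}, Ordinal.{0} → ((Fin n → Ordinal.{0}) → Ordinal.{0} → A) → Prop
  | 0, δ, Φ => {ξ : Ordinal | ξ < δ ∧ Φ Fin.elim0 ξ ≠ 0}.Finite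
  | _ + 1, δ, Φ => ∃ Ψ, IsNTrivialization δ Φ Ψ

/-!
If `Ψ₀` trivializes `Φ` on `η`, then `Ψ - Ψ₀` is an `(n-1)`-coherent family of height `ξ`.
Granted that such a family is trivial, it agrees below `ξ`, at all but finitely many arguments
for each tuple, with a family `C` whose alternating sums vanish identically on all of `η`: the
alternating sum of a trivialization (or `C = 0` when `n = 1`). Then `Ψ₀ + C`, with its values
below `ξ` replaced by those of `Ψ`, is a trivialization of `Φ` extending `Ψ`.

That a `q`-coherent family of height `ξ` is trivial when `ξ` is a successor or `cf ξ < ℵ_q`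
is proved by induction on `q`. At a successor `σ + 1` the cone `ψ_β̄ = ±φ_{β̄⌢σ}` trivializes it.
Otherwise `cf ξ ≤ ℵ_{q-1}`, and one builds trivializations on the heights `F s + 1` along a
fundamental sequence `F` of `ξ`, each extending all earlier ones: at stage `s` the union of the
earlier ones lives on an ordinal of cofinality `cf s < cf ξ ≤ ℵ_{q-1}`, so by induction the
extension argument above applies. The union of the whole chain trivializes the family on `ξ`.
-/

open Filter

theorem eventuallyEq_cofinite_inf_principal_iff {α β : Type*} {s : Set α} {f g : α → β} :
    f =ᶠ[cofinite ⊓ 𝓟 s] g ↔ {x | x ∈ s ∧ f x ≠ g x}.Finite := by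
  simp only [eventuallyEq_inf_principal_iff, eventually_cofinite, Classical.not_imp]

theorem exists_compatible_seq {ι α : Type*} [LT ι] [WellFoundedLT ι] [Nonempty α]
    (P : ι → α → Prop) (R : ι → α → α → Prop)
    (step : ∀ s (x : ι → α), (∀ t < s, P t (x t)) → (∀ t t', t < t' → t' < s → R t (x t) (x t')) →
      ∃ y, P s y ∧ ∀ t < s, R t (x t) y) :
    ∃ x : ι → α, (∀ s, P s (x s)) ∧ ∀ t s, t < s → R t (x t) (x s) := by
  classical
  let x : ι → α := WellFoundedLT.fix fun s prev =>
    if h : ∃ y, P s y ∧ ∀ t (ht : t < s), R t (prev t ht) y then h.choose else Classical.arbitrary α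
  have hx (s : ι) : P s (x s) ∧ ∀ t < s, R t (x t) (x s) := by
    induction s using WellFoundedLT.induction with
    | _ s ih =>
      have h := step s x (fun t ht => (ih t ht).1) fun t t' htt' ht' => (ih t' ht').2 t htt'
      rw [show x s = _ from WellFoundedLT.fix_eq _ s, dif_pos h]
      exact h.choose_spec
  exact ⟨x, fun s => (hx s).1, fun t s h => (hx s).2 t h⟩

def IsSuccOrCofLtAleph (m : ℕ) (ξ : Ordinal.{0}) : Prop :=
  (∃ σ, ξ = σ + 1) ∨ Ordinal.cof ξ < Cardinal.aleph (m : Ordinal)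

theorem IsSuccOrCofLtAleph.mono {m m' : ℕ} {ξ : Ordinal.{0}} (h : IsSuccOrCofLtAleph m ξ)
    (hm : m ≤ m') : IsSuccOrCofLtAleph m' ξ :=
  h.imp_right fun h => h.trans_le (Cardinal.aleph_le_aleph.2 (Nat.cast_le.2 hm))

abbrev Family (A : Type*) (n : ℕ) := (Fin n → Ordinal.{0}) → Ordinal.{0} → A

section

variable {A : Type*} {n : ℕ}

def EqBelow (c : Ordinal.{0}) (Θ Θ' : Family A n) : Prop :=
  ∀ β : Fin n → Ordinal.{0}, StrictMono β → (∀ i, β i < c) →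
    ∀ ζ, ζ < c → (∀ i, ζ < β i) → Θ β ζ = Θ' β ζ

theorem EqBelow.symm {c : Ordinal.{0}} {Θ Θ' : Family A n} (h : EqBelow c Θ Θ') : EqBelow c Θ' Θ :=
  fun β hβ hβc ζ hζc hζβ => (h β hβ hβc ζ hζc hζβ).symm

theorem EqBelow.trans {c : Ordinal.{0}} {Θ Θ' Θ'' : Family A n} (h : EqBelow c Θ Θ')
    (h' : EqBelow c Θ' Θ'') : EqBelow c Θ Θ'' :=
  fun β hβ hβc ζ hζc hζβ => (h β hβ hβc ζ hζc hζβ).trans (h' β hβ hβc ζ hζc hζβ)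

theorem EqBelow.mono {c c' : Ordinal.{0}} {Θ Θ' : Family A n} (h : EqBelow c Θ Θ') (hc : c' ≤ c) :
    EqBelow c' Θ Θ' :=
  fun β hβ hβc ζ hζc hζβ => h β hβ (fun i => (hβc i).trans_le hc) ζ (hζc.trans_le hc) hζβ

variable [AddCommGroup A]

theorem altSum_congr {Ψ Ψ' : Family A n} {β : Fin (n + 1) → Ordinal.{0}} {ζ : Ordinal.{0}}
    (h : ∀ i : Fin (n + 1), Ψ (β ∘ i.succAbove) ζ = Ψ' (β ∘ i.succAbove) ζ) :
    altSum Ψ β ζ = altSum Ψ' β ζ :=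
  Finset.sum_congr rfl fun i _ => by rw [h i]

theorem altSum_add (Ψ Ψ' : Family A n) (β : Fin (n + 1) → Ordinal.{0}) :
    altSum (Ψ + Ψ') β = altSum Ψ β + altSum Ψ' β := by
  ext ζ
  simp [altSum, Finset.sum_add_distrib]

theorem altSum_sub (Ψ Ψ' : Family A n) (β : Fin (n + 1) → Ordinal.{0}) :
    altSum (Ψ - Ψ') β = altSum Ψ β - altSum Ψ' β := by
  ext ζ
  simp [altSum, Finset.sum_sub_distrib, smul_sub]

theorem altSum_zsmul (k : ℤ) (Ψ : Family A n) (β : Fin (n + 1) → Ordinal.{0}) :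
    altSum (k • Ψ) β = k • altSum Ψ β := by
  ext ζ
  simp [altSum, Finset.smul_sum, smul_comm k]

theorem altSum_altSum (Θ : Family A n) (γ : Fin (n + 2) → Ordinal.{0}) :
    altSum (fun β => altSum Θ β) γ = 0 := by
  ext ζ
  simp only [altSum, Finset.smul_sum, smul_smul, ← pow_add, Pi.zero_apply]
  rw [← Finset.sum_product']
  -- The terms at `(j, i)` and `(j.succAbove i, i.predAbove j)` delete the same two coordinates
  -- of `γ`, with opposite signs.
  refine Finset.sum_ninvolution (fun p => (p.1.succAbove p.2, p.2.predAbove p.1)) (fun ⟨j, i⟩ => ?_)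
    (fun ⟨j, i⟩ _ => by simp [Fin.succAbove_ne]) (by simp) (fun ⟨j, i⟩ => by
      simp [Fin.succAbove_succAbove_predAbove, Fin.predAbove_predAbove_succAbove])
  have hswap : (γ ∘ j.succAbove) ∘ i.succAbove =
      (γ ∘ (j.succAbove i).succAbove) ∘ (i.predAbove j).succAbove :=
    Fin.removeNth_removeNth_eq_swap γ i j
  dsimp only
  rw [← hswap, Fin.neg_one_pow_succAbove_add_predAbove, neg_smul, add_neg_cancel]

theorem altSum_snoc (E : Family A (n + 1)) (β : Fin (n + 1) → Ordinal.{0}) (σ : Ordinal.{0}) :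
    altSum E (Fin.snoc β σ) =
      altSum (fun g => E (Fin.snoc g σ)) β + ((-1 : ℤ) ^ (n + 1)) • E β := by
  ext ζ
  have hface (i : Fin (n + 1)) :
      (Fin.snoc β σ : Fin (n + 2) → Ordinal.{0}) ∘ i.castSucc.succAbove =
        Fin.snoc (β ∘ i.succAbove) σ := by
    ext k
    refine Fin.lastCases ?_ (fun k => ?_) k <;> simp
  have hlast : (Fin.snoc β σ : Fin (n + 2) → Ordinal.{0}) ∘ (Fin.last (n + 1)).succAbove = β := by
    ext k; simp [Fin.succAbove_last]
  simp only [altSum, Fin.sum_univ_castSucc (n := n + 1), Pi.add_apply, Pi.smul_apply, hface, hlast,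
    Fin.val_castSucc, Fin.val_last]

theorem altSum_fin_one (Ψ : Family A 0) (β : Fin 1 → Ordinal.{0}) : altSum Ψ β = Ψ Fin.elim0 := by
  ext ζ
  simp [altSum, Subsingleton.elim _ (Fin.elim0 : Fin 0 → Ordinal.{0})]

theorem isNTrivialization_iff {δ : Ordinal.{0}} {Φ : Family A (n + 1)} {Ψ : Family A n} :
    IsNTrivialization δ Φ Ψ ↔ ∀ β : Fin (n + 1) → Ordinal.{0}, StrictMono β → (∀ i, β i < δ) →
      altSum Ψ β =ᶠ[cofinite ⊓ 𝓟 (Iio (β 0))] Φ β := by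
  simp only [IsNTrivialization, eventuallyEq_cofinite_inf_principal_iff, mem_Iio]

theorem nCoherent_iff {δ : Ordinal.{0}} {Φ : Family A n} :
    NCoherent δ Φ ↔ ∀ β : Fin (n + 1) → Ordinal.{0}, StrictMono β → (∀ i, β i < δ) →
      altSum Φ β =ᶠ[cofinite ⊓ 𝓟 (Iio (β 0))] 0 := by
  simp only [NCoherent, eventuallyEq_cofinite_inf_principal_iff, mem_Iio, Pi.zero_apply]

theorem nTrivial_zero_iff {δ : Ordinal.{0}} {E : Family A 0} :
    NTrivial δ E ↔ E Fin.elim0 =ᶠ[cofinite ⊓ 𝓟 (Iio δ)] 0 := by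
  simp only [NTrivial, eventuallyEq_cofinite_inf_principal_iff, mem_Iio, Pi.zero_apply]

theorem IsNTrivialization.mono {δ δ' : Ordinal.{0}} {Φ : Family A (n + 1)} {Ψ : Family A n}
    (h : IsNTrivialization δ Φ Ψ) (hδ : δ' ≤ δ) : IsNTrivialization δ' Φ Ψ :=
  fun β hβ hβδ => h β hβ fun i => (hβδ i).trans_le hδ

theorem NCoherent.mono {δ δ' : Ordinal.{0}} {Φ : Family A n} (h : NCoherent δ Φ) (hδ : δ' ≤ δ) :
    NCoherent δ' Φ :=
  fun β hβ hβδ => h β hβ fun i => (hβδ i).trans_le hδ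

theorem IsNTrivialization.nCoherent_sub {δ : Ordinal.{0}} {Φ : Family A (n + 1)}
    {Ψ Ψ' : Family A n} (h : IsNTrivialization δ Φ Ψ) (h' : IsNTrivialization δ Φ Ψ') :
    NCoherent δ (Ψ - Ψ') := by
  rw [isNTrivialization_iff] at h h'
  refine nCoherent_iff.2 fun β hβ hβδ => ?_
  simpa [altSum_sub] using (h β hβ hβδ).sub (h' β hβ hβδ)

/-- `ψ_β̄ = (-1)^n φ_{β̄⌢σ}`; the guard kills the faces of a tuple ending in `σ` that still
contain `σ`. -/
def cone (σ : Ordinal.{0}) (E : Family A (n + 1)) : Family A n := fun β ζ =>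
  if ∀ i, β i < σ then ((-1 : ℤ) ^ n) • E (Fin.snoc β σ) ζ else 0

theorem altSum_cone_of_last_eq {σ : Ordinal.{0}} (E : Family A (n + 1))
    {β : Fin (n + 1) → Ordinal.{0}} (hβ : StrictMono β) (hσ : β (Fin.last n) = σ) :
    altSum (cone σ E) β = E β := by
  ext ζ
  have hface (i : Fin n) : ¬ ∀ k, (β ∘ i.castSucc.succAbove) k < σ := fun h => by
    obtain ⟨k, hk⟩ := Fin.exists_succAbove_eq (Fin.castSucc_lt_last i).ne'
    simpa [hk, hσ] using h k
  have hlast : ∀ k, (β ∘ (Fin.last n).succAbove) k < σ := fun k => by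
    simpa [Fin.succAbove_last, ← hσ] using hβ (Fin.castSucc_lt_last k)
  have hsnoc : (Fin.snoc (β ∘ (Fin.last n).succAbove) σ : Fin (n + 1) → Ordinal.{0}) = β := by
    rw [Fin.succAbove_last, ← hσ]; exact Fin.snoc_init_self β
  simp only [altSum, Fin.sum_univ_castSucc, cone, hface, hlast, hsnoc, if_false, implies_true,
    if_true, smul_zero, Finset.sum_const_zero, zero_add, Fin.val_last, smul_smul, ← pow_add,
    Even.neg_one_pow ⟨n, rfl⟩, one_smul]

theorem NCoherent.isNTrivialization_cone {σ : Ordinal.{0}} {E : Family A (n + 1)}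
    (hE : NCoherent (σ + 1) E) : IsNTrivialization (σ + 1) E (cone σ E) := by
  refine isNTrivialization_iff.2 fun β hβ hβσ => ?_
  rcases (Order.lt_add_one_iff.1 (hβσ (Fin.last n))).eq_or_lt with hσ | hσ
  · exact EventuallyEq.of_eq (altSum_cone_of_last_eq E hβ hσ)
  have hlt : ∀ i, β i < σ := fun i => (hβ.monotone (Fin.le_last i)).trans_lt hσ
  have hsnoc : StrictMono (Fin.snoc β σ : Fin (n + 2) → Ordinal.{0}) := by
    simpa [Fin.insertNth_last'] using Fin.strictMono_insertNth_last hβ σ hσ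
  have hcoh := nCoherent_iff.1 hE _ hsnoc fun i => by
    refine Fin.lastCases ?_ (fun i => ?_) i <;> simp [(hlt _).trans (Order.lt_add_one_iff.2 le_rfl)]
  have hcone : altSum (cone σ E) β = ((-1 : ℤ) ^ n) • altSum (fun g => E (Fin.snoc g σ)) β := by
    rw [← altSum_zsmul]
    ext ζ
    exact altSum_congr fun i => if_pos fun k => hlt _
  rw [show (Fin.snoc β σ : Fin (n + 2) → Ordinal.{0}) 0 = β 0 from Fin.snoc_castSucc (i := 0) ..,
    altSum_snoc] at hcoh
  refine hcoh.mono fun ζ hζ => ?_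
  simp only [Pi.add_apply, Pi.smul_apply, Pi.zero_apply] at hζ
  rw [hcone, Pi.smul_apply, eq_neg_of_add_eq_zero_left hζ, smul_neg, smul_smul, ← pow_add,
    ← neg_smul, show n + (n + 1) = 2 * n + 1 by ring, pow_succ, pow_mul]
  simp

theorem NCoherent.nTrivial_add_one : ∀ {n : ℕ} {E : Family A n} {σ : Ordinal.{0}},
    NCoherent (σ + 1) E → NTrivial (σ + 1) E
  | 0, E, σ, hE => by
    have h := nCoherent_iff.1 hE (fun _ => σ) (Subsingleton.strictMono (α := Fin 1) _)
      fun _ => Order.lt_add_one_iff.2 le_rfl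
    rw [altSum_fin_one, eventuallyEq_inf_principal_iff] at h
    rw [nTrivial_zero_iff, eventuallyEq_inf_principal_iff]
    filter_upwards [h, eventually_cofinite_ne σ] with ζ hζ hne hlt
    exact hζ ((Order.lt_add_one_iff.1 hlt).lt_of_ne hne)
  | _ + 1, _, _, hE => ⟨_, hE.isNTrivialization_cone⟩

theorem exists_isNTrivialization_of_chain {ι : Type*} [LinearOrder ι]
    {E : Family A (n + 1)} {g : ι → Ordinal.{0}} (hg : Monotone g) {Θ : ι → Family A n}
    (hΘ : ∀ i, IsNTrivialization (g i) E (Θ i)) (hcompat : ∀ i j, i < j → EqBelow (g i) (Θ i) (Θ j))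
    {δ : Ordinal.{0}} (hδ : ∀ x < δ, ∃ i, x < g i) :
    ∃ Θ', IsNTrivialization δ E Θ' ∧ ∀ i, EqBelow (g i) (Θ i) Θ' := by
  classical
  let Θ' : Family A n := fun β ζ =>
    if h : ∃ i, (∀ k, β k < g i) ∧ ζ < g i then Θ h.choose β ζ else 0
  have hΘ' (i : ι) : EqBelow (g i) (Θ i) Θ' := by
    intro β hβ hβi ζ hζi hζβ
    have h : ∃ i, (∀ k, β k < g i) ∧ ζ < g i := ⟨i, hβi, hζi⟩
    simp only [Θ', dif_pos h]
    rcases lt_trichotomy i h.choose with hi | hi | hi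
    · exact hcompat _ _ hi β hβ hβi ζ hζi hζβ
    · rw [← hi]
    · exact (hcompat _ _ hi β hβ h.choose_spec.1 ζ h.choose_spec.2 hζβ).symm
  refine ⟨Θ', isNTrivialization_iff.2 fun β hβ hβδ => ?_, hΘ'⟩
  choose i hi using fun k => hδ (β k) (hβδ k)
  have : Nonempty ι := ⟨i 0⟩
  obtain ⟨j, hj⟩ := Finite.exists_le i
  have hβj (k : Fin (n + 1)) : β k < g j := (hi k).trans_le (hg (hj k))
  refine EventuallyEq.trans ?_ (isNTrivialization_iff.1 (hΘ j) β hβ hβj)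
  refine (eventuallyEq_principal.2 fun ζ (hζ : ζ < β 0) => altSum_congr fun k => ?_).filter_mono
    inf_le_right
  exact (hΘ' j _ (hβ.comp (Fin.strictMono_succAbove k)) (fun l => hβj _) ζ (hζ.trans (hβj 0))
    fun l => hζ.trans_le (hβ.monotone (Fin.zero_le _))).symm

theorem NTrivial.exists_cocycle_eventuallyEq {ξ : Ordinal.{0}} :
    ∀ {n : ℕ} {E : Family A n}, NTrivial ξ E → ∃ C : Family A n, (∀ γ, altSum C γ = 0) ∧
      ∀ β : Fin n → Ordinal.{0}, StrictMono β → (∀ i, β i < ξ) →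
        ∀ᶠ ζ in cofinite, ζ < ξ → (∀ i, ζ < β i) → C β ζ = E β ζ
  | 0, E, hE => by
    refine ⟨0, fun γ => by ext; simp [altSum], fun β _ _ => ?_⟩
    rw [Subsingleton.elim β Fin.elim0]
    filter_upwards [eventuallyEq_inf_principal_iff.1 (nTrivial_zero_iff.1 hE)] with ζ hζ hζξ _
    exact (hζ hζξ).symm
  | _ + 1, _, ⟨Θ, hΘ⟩ => by
    refine ⟨fun β => altSum Θ β, altSum_altSum Θ, fun β hβ hβξ => ?_⟩
    filter_upwards [eventuallyEq_inf_principal_iff.1 (isNTrivialization_iff.1 hΘ β hβ hβξ)]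
      with ζ hζ _ hζβ
    exact hζ (hζβ 0)

theorem exists_isNTrivialization_eqBelow {ξ η : Ordinal.{0}} {Φ : Family A (n + 1)}
    {Ψ : Family A n} (htriv : ∀ E : Family A n, NCoherent ξ E → NTrivial ξ E) (hξη : ξ ≤ η)
    (hΦ : NTrivial η Φ) (hΨ : IsNTrivialization ξ Φ Ψ) :
    ∃ Ψ', IsNTrivialization η Φ Ψ' ∧ EqBelow ξ Ψ' Ψ := by
  classical
  obtain ⟨Ψ₀, hΨ₀⟩ := hΦ
  obtain ⟨C, hC, hCE⟩ := (htriv _ (hΨ.nCoherent_sub (hΨ₀.mono hξη))).exists_cocycle_eventuallyEq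
  let C' : Family A n := fun β ζ => if (∀ i, β i < ξ) ∧ ζ < ξ then (Ψ - Ψ₀) β ζ else C β ζ
  refine ⟨Ψ₀ + C', isNTrivialization_iff.2 fun γ hγ hγη => ?_, fun β _ hβ ζ hζ _ => ?_⟩
  · have hface (i : Fin (n + 1)) :
        C' (γ ∘ i.succAbove) =ᶠ[cofinite ⊓ 𝓟 (Iio (γ 0))] C (γ ∘ i.succAbove) := by
      rw [eventuallyEq_inf_principal_iff]
      by_cases hi : ∀ k, (γ ∘ i.succAbove) k < ξ
      · filter_upwards [hCE _ (hγ.comp (Fin.strictMono_succAbove i)) hi] with ζ hζ hζγ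
        by_cases hζξ : ζ < ξ
        · exact (if_pos ⟨hi, hζξ⟩).trans
            (hζ hζξ fun k => hζγ.trans_le (hγ.monotone (Fin.zero_le _))).symm
        · exact if_neg fun h => hζξ h.2
      · exact Eventually.of_forall fun ζ _ => if_neg fun h => hi h.1
    have hC' : altSum C' γ =ᶠ[cofinite ⊓ 𝓟 (Iio (γ 0))] 0 := by
      rw [← hC γ]
      exact (eventually_all.2 hface).mono fun ζ hζ => altSum_congr hζ
    simpa [altSum_add] using (isNTrivialization_iff.1 hΨ₀ γ hγ fun i => hγη i).add hC'
  · simp [C', hβ, hζ]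

theorem exists_isNTrivialization_extending_chain
    (htriv : ∀ δ, IsSuccOrCofLtAleph n δ → ∀ E : Family A n, NCoherent δ E → NTrivial δ E)
    {s : Ordinal.{0}} (hs : s.cof < Cardinal.aleph n) {f : Iio s → Ordinal.{0}} (hf : StrictMono f)
    {E : Family A (n + 1)} {Θ : Iio s → Family A n}
    (hΘ : ∀ t, IsNTrivialization (f t + 1) E (Θ t))
    (hcompat : ∀ t t', t < t' → EqBelow (f t + 1) (Θ t) (Θ t'))
    {η : Ordinal.{0}} (hη : ∀ t, f t < η) (hE : NTrivial η E) :
    ∃ Θ', IsNTrivialization η E Θ' ∧ ∀ t, EqBelow (f t + 1) (Θ t) Θ' := by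
  set δ := ⨆ t, f t + 1 with hδ
  obtain ⟨Θδ, hΘδ, hΘΘδ⟩ := exists_isNTrivialization_of_chain (fun t t' h => by
    simpa using hf.monotone h) hΘ hcompat fun x hx => Ordinal.lt_iSup_iff.1 hx
  have hδ_small : IsSuccOrCofLtAleph n δ := Or.inr (by rwa [hδ, Ordinal.cof_iSup_Iio_add_one hf])
  obtain ⟨Θ', hΘ', hΘ'Θδ⟩ := exists_isNTrivialization_eqBelow (htriv δ hδ_small)
    (Ordinal.iSup_le fun t => Order.add_one_le_of_lt (hη t)) hE hΘδ
  exact ⟨Θ', hΘ', fun t => (hΘΘδ t).trans (hΘ'Θδ.symm.mono (Ordinal.le_iSup _ t))⟩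

theorem NCoherent.nTrivial_of_cof_le
    (htriv : ∀ δ, IsSuccOrCofLtAleph n δ → ∀ E : Family A n, NCoherent δ E → NTrivial δ E)
    {ξ : Ordinal.{0}} (hξ : ξ.cof ≤ Cardinal.aleph n) {E : Family A (n + 1)} (hE : NCoherent ξ E) :
    NTrivial ξ E := by
  obtain ⟨F, hF⟩ := Ordinal.exists_isFundamentalSeq (o := ξ) rfl
  let g : Iio ξ.cof.ord → Ordinal.{0} := fun i => (F i : Ordinal.{0}) + 1
  have hg : StrictMono g := fun i j h => by simpa [g] using hF.strictMono h
  have hgE (i : Iio ξ.cof.ord) : NTrivial (g i) E :=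
    (hE.mono (Order.add_one_le_of_lt (F i).2)).nTrivial_add_one
  obtain ⟨Θ, hΘ, hcompat⟩ := exists_compatible_seq (fun i Θ => IsNTrivialization (g i) E Θ)
    (fun i Θ Θ' => EqBelow (g i) Θ Θ') fun s x hx hxc => by
      have hs : (s : Ordinal.{0}).cof < Cardinal.aleph n :=
        ((s : Ordinal.{0}).cof_le_card.trans_lt (Cardinal.lt_ord.1 s.2)).trans_le hξ
      have hsub : Iio (s : Ordinal.{0}) ⊆ Iio ξ.cof.ord := Iio_subset_Iio (le_of_lt s.2)
      obtain ⟨Θ', hΘ', hxΘ'⟩ := exists_isNTrivialization_extending_chain htriv hs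
        (f := fun t => F (inclusion hsub t)) (fun t t' h => hF.strictMono h)
        (Θ := fun t => x (inclusion hsub t)) (fun t => hx _ t.2) (fun t t' h => hxc _ _ h t'.2)
        (η := g s) (fun t => Order.lt_add_one_iff.2 (hF.strictMono t.2).le) (hgE s)
      exact ⟨Θ', hΘ', fun t ht => hxΘ' ⟨t, ht⟩⟩
  obtain ⟨Θξ, hΘξ, -⟩ := exists_isNTrivialization_of_chain (δ := ξ) hg.monotone hΘ
    hcompat fun x hx => by rwa [← hF.iSup_add_one_eq, Ordinal.lt_iSup_iff] at hx
  exact ⟨Θξ, hΘξ⟩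

theorem NCoherent.nTrivial {ξ : Ordinal.{0}} {E : Family A n} (hξ : IsSuccOrCofLtAleph n ξ)
    (hE : NCoherent ξ E) : NTrivial ξ E := by
  induction n generalizing ξ with
  | zero =>
    rcases hξ with ⟨σ, rfl⟩ | hcof
    · exact hE.nTrivial_add_one
    rcases Ordinal.zero_or_succ_or_isSuccLimit ξ with rfl | ⟨σ, rfl⟩ | hlim
    · simp [NTrivial]
    · rw [Order.succ_eq_add_one] at hE ⊢
      exact hE.nTrivial_add_one
    · simp only [CharP.cast_eq_zero, Cardinal.aleph_zero] at hcof
      exact absurd (Ordinal.aleph0_le_cof_iff.2 (Ordinal.one_lt_cof_iff.2 hlim)) hcof.not_ge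
  | succ n ih =>
    rcases hξ with ⟨σ, rfl⟩ | hcof
    · exact hE.nTrivial_add_one
    refine hE.nTrivial_of_cof_le (fun δ hδ E hE => ih hδ hE) (Order.lt_succ_iff.1 ?_)
    rwa [Cardinal.succ_aleph, ← Nat.cast_succ]

end

/-- Lemma: for `n > m ≥ 0` (here `n = p + 1` with `m ≤ p`) and `ξ < η` with `ξ` a successor
or `cf (ξ) < ℵ_m`, if `Φ` is an `n`-trivial family of height `η`, then any
`n`-trivialization `Ψ` of `Φ ↾ ξ` extends to an `n`-trivialization `Ψ'` of `Φ`. -/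
theorem statement12 (A : Type*) [AddCommGroup A] (m p : ℕ) (hmp : m ≤ p)
    (ξ η : Ordinal) (hξη : ξ < η)
    (hξ : (∃ σ, ξ = σ + 1) ∨ Ordinal.cof ξ < Cardinal.aleph (m : Ordinal))
    (Φ : (Fin (p + 1) → Ordinal) → Ordinal → A)
    (hΦ : NTrivial η Φ)
    (Ψ : (Fin p → Ordinal) → Ordinal → A)
    (hΨ : IsNTrivialization ξ Φ Ψ) :
    ∃ Ψ' : (Fin p → Ordinal) → Ordinal → A, IsNTrivialization η Φ Ψ' ∧
      ∀ β : Fin p → Ordinal, StrictMono β → (∀ i, β i < ξ) →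
        ∀ ζ, ζ < ξ → (∀ i, ζ < β i) → Ψ' β ζ = Ψ β ζ := by
  have hξp : IsSuccOrCofLtAleph p ξ := IsSuccOrCofLtAleph.mono hξ hmp
  exact exists_isNTrivialization_eqBelow (fun E hE => hE.nTrivial hξp) hξη.le hΦ hΨ
end
end

section
/- Let ε be an ordinal of uncountable cofinality, let A be an abelian group, and let Φ = {φ_α : α → A | α < ε} be a coherent family. For α < β < ε set e(α,β) = {ξ < α : φ_α(ξ) ≠ φ_β(ξ)}, and define ℐ = {b ∈ [ε]^{≤ℵ₀} : there exists β ≥ sup(b) with β < ε such that for every n ∈ ω the set {α ∈ b : |e(α,β)| ≤ n} is finite}. Then ℐ is a P-ideal on ε: it is an ideal of countable subsets of ε containing all finite subsets of ε, and for every countable collection {b_n : n ∈ ω} ⊆ ℐ there exists b ∈ ℐ with b_n ∖ b finite for all n. -/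
/-!
Write `b ∈ ℐ` as "the sizes `|e(α, β)|` tend to infinity along `b`" for some bound `β`. By
coherence, `e(α, β') ⊆ e(α, β) ∪ e(β', β)` with `e(β', β)` finite whenever `β' ≤ β < ε`, so such
a witness `β` may always be raised. Since `cf ε > ω`, countably many witnesses `β_n` for
`b_n ∈ ℐ` have a common upper bound `β < ε`, and then `b = ⋃ₙ {α ∈ b_n : |e(α, β)| ≥ n}` is in
`ℐ` (below any level `m` only `b_0, …, b_m` contribute, each finitely often) while
`b_n ∖ b ⊆ {α ∈ b_n : |e(α, β)| < n}` is finite.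
-/

noncomputable section
open Ordinal Set

/-- `Φ` codes a coherent family of functions `φ_β = Φ β : β → A` (`β < δ`):
`φ_γ ↾ β =* φ_β` (agreement at all but finitely many arguments) for all `β ≤ γ < δ`. -/
def CoherentFam {A : Type*} (δ : Ordinal.{0}) (Φ : Ordinal.{0} → Ordinal.{0} → A) : Prop :=
  ∀ β γ, β ≤ γ → γ < δ → {α : Ordinal | α < β ∧ Φ γ α ≠ Φ β α}.Finite

/-- The family coded by `Φ` is trivial: some `f : δ → A` satisfies `f ↾ β =* φ_β`
for all `β < δ`. -/
def TrivialFam {A : Type*} (δ : Ordinal.{0}) (Φ : Ordinal.{0} → Ordinal.{0} → A) : Prop :=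
  ∃ f : Ordinal → A, ∀ β, β < δ → {α : Ordinal | α < β ∧ f α ≠ Φ β α}.Finite

/-- `e (α, β) = {ξ < α | φ_α (ξ) ≠ φ_β (ξ)}`. -/
def eSet {A : Type*} (Φ : Ordinal.{0} → Ordinal.{0} → A) (α β : Ordinal.{0}) :
    Set Ordinal.{0} :=
  {ξ | ξ < α ∧ Φ α ξ ≠ Φ β ξ}

/-- The ideal `ℐ` of countable `b ⊆ ε` such that for some `β ≥ sup b` (`β < ε`),
`{α ∈ b : |e (α, β)| ≤ n}` is finite for every `n`. -/
def walkIdeal {A : Type*} (Φ : Ordinal.{0} → Ordinal.{0} → A) (ε : Ordinal.{0}) :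
    Set (Set Ordinal.{0}) :=
  {b | b ⊆ Set.Iio ε ∧ b.Countable ∧ ∃ β, β < ε ∧ (∀ x ∈ b, x ≤ β) ∧
    ∀ n : ℕ, {α ∈ b | (eSet Φ α β).ncard ≤ n}.Finite}

open Cardinal

theorem Ordinal.exists_ub_of_countable_of_aleph0_lt_cof {ε : Ordinal.{u}} (hε : ℵ₀ < ε.cof)
    {s : Set Ordinal.{u}} (hs : s.Countable) (hsε : s ⊆ Iio ε) : ∃ β < ε, ∀ x ∈ s, x ≤ β := by
  refine ⟨sSup s, sSup_lt_of_lt_cof ?_ hsε, fun x hx => le_csSup ⟨ε, fun y hy => (hsε hy).le⟩ hx⟩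
  rw [← Ordinal.lift_cof]
  exact (le_aleph0_iff_set_countable.2 hs).trans_lt (aleph0_lt_lift.2 hε)

section eSet

variable {A : Type*} {Φ : Ordinal.{0} → Ordinal.{0} → A}

theorem eSet_finite {ε : Ordinal} (hΦ : CoherentFam ε Φ) {α β : Ordinal} (hαβ : α ≤ β)
    (hβ : β < ε) : (eSet Φ α β).Finite :=
  (hΦ α β hαβ hβ).subset fun _ hξ => ⟨hξ.1, Ne.symm hξ.2⟩

theorem eSet_subset_union {α β β' : Ordinal} (hαβ' : α ≤ β') :
    eSet Φ α β' ⊆ eSet Φ α β ∪ eSet Φ β' β := by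
  intro ξ ⟨hξα, hne⟩
  by_cases h : Φ β' ξ = Φ β ξ
  · exact Or.inl ⟨hξα, h ▸ hne⟩
  · exact Or.inr ⟨hξα.trans_le hαβ', h⟩

theorem ncard_eSet_le_add {ε : Ordinal} (hΦ : CoherentFam ε Φ) {α β β' : Ordinal}
    (hαβ' : α ≤ β') (hβ'β : β' ≤ β) (hβ : β < ε) :
    (eSet Φ α β').ncard ≤ (eSet Φ α β).ncard + (eSet Φ β' β).ncard :=
  (ncard_le_ncard (eSet_subset_union hαβ')
    ((eSet_finite hΦ (hαβ'.trans hβ'β) hβ).union (eSet_finite hΦ hβ'β hβ))).trans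
    (ncard_union_le _ _)

end eSet

def ESetDiverges {A : Type*} (Φ : Ordinal.{0} → Ordinal.{0} → A) (β : Ordinal.{0})
    (b : Set Ordinal.{0}) : Prop :=
  ∀ n : ℕ, {α ∈ b | (eSet Φ α β).ncard ≤ n}.Finite

namespace ESetDiverges

variable {A : Type*} {Φ : Ordinal.{0} → Ordinal.{0} → A} {β : Ordinal} {b c : Set Ordinal}

theorem of_finite (hb : b.Finite) : ESetDiverges Φ β b :=
  fun _ => hb.subset fun _ hα => hα.1

theorem mono (hb : ESetDiverges Φ β b) (hcb : c ⊆ b) : ESetDiverges Φ β c :=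
  fun n => (hb n).subset fun _ hα => ⟨hcb hα.1, hα.2⟩

theorem union (hb : ESetDiverges Φ β b) (hc : ESetDiverges Φ β c) :
    ESetDiverges Φ β (b ∪ c) := fun n =>
  ((hb n).union (hc n)).subset fun _ ⟨hα, hαn⟩ => hα.imp (⟨·, hαn⟩) (⟨·, hαn⟩)

theorem raise {ε β' : Ordinal} (hΦ : CoherentFam ε Φ) (hβ'β : β' ≤ β) (hβ : β < ε)
    (hbβ' : ∀ x ∈ b, x ≤ β') (hb : ESetDiverges Φ β' b) : ESetDiverges Φ β b := fun n =>
  (hb (n + (eSet Φ β' β).ncard)).subset fun α ⟨hαb, hα⟩ =>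
    ⟨hαb, (ncard_eSet_le_add hΦ (hbβ' α hαb) hβ'β hβ).trans (Nat.add_le_add_right hα _)⟩

end ESetDiverges

namespace walkIdeal

variable {A : Type*} {Φ : Ordinal.{0} → Ordinal.{0} → A} {ε : Ordinal}

theorem mem_of_finite (hε : ℵ₀ < ε.cof) {b : Set Ordinal} (hbε : b ⊆ Iio ε) (hb : b.Finite) :
    b ∈ walkIdeal Φ ε := by
  obtain ⟨β, hβ, hbβ⟩ := exists_ub_of_countable_of_aleph0_lt_cof hε hb.countable hbε
  exact ⟨hbε, hb.countable, β, hβ, hbβ, ESetDiverges.of_finite hb⟩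

theorem mem_of_subset {b c : Set Ordinal} (hb : b ∈ walkIdeal Φ ε) (hcb : c ⊆ b) :
    c ∈ walkIdeal Φ ε := by
  obtain ⟨hbε, hbc, β, hβ, hbβ, hdiv⟩ := hb
  exact ⟨hcb.trans hbε, hbc.mono hcb, β, hβ, fun x hx => hbβ x (hcb hx),
    ESetDiverges.mono hdiv hcb⟩

theorem union_mem (hΦ : CoherentFam ε Φ) {b c : Set Ordinal} (hb : b ∈ walkIdeal Φ ε)
    (hc : c ∈ walkIdeal Φ ε) : b ∪ c ∈ walkIdeal Φ ε := by
  obtain ⟨hbε, hbc, β₁, hβ₁, hbβ₁, hdiv₁⟩ := hb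
  obtain ⟨hcε, hcc, β₂, hβ₂, hcβ₂, hdiv₂⟩ := hc
  have hβ : max β₁ β₂ < ε := max_lt hβ₁ hβ₂
  refine ⟨union_subset hbε hcε, hbc.union hcc, max β₁ β₂, hβ, ?_, ?_⟩
  · rintro x (hx | hx)
    exacts [le_max_of_le_left (hbβ₁ x hx), le_max_of_le_right (hcβ₂ x hx)]
  · exact (ESetDiverges.raise hΦ (le_max_left _ _) hβ hbβ₁ hdiv₁).union
      (ESetDiverges.raise hΦ (le_max_right _ _) hβ hcβ₂ hdiv₂)

theorem iUnion_sep_mem {F : ℕ → Set Ordinal} {β : Ordinal} (hβ : β < ε)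
    (hFε : ∀ n, F n ⊆ Iio ε) (hFc : ∀ n, (F n).Countable) (hFβ : ∀ n, ∀ x ∈ F n, x ≤ β)
    (hdiv : ∀ n, ESetDiverges Φ β (F n)) :
    (⋃ n, {α ∈ F n | n ≤ (eSet Φ α β).ncard}) ∈ walkIdeal Φ ε := by
  refine ⟨iUnion_subset fun n _ hα => hFε n hα.1,
    countable_iUnion fun n => (hFc n).mono fun _ hα => hα.1, β, hβ, ?_, fun m => ?_⟩
  · simp only [mem_iUnion]
    rintro x ⟨n, hx, -⟩
    exact hFβ n x hx
  · refine (finite_iUnion fun n : Fin (m + 1) => hdiv n m).subset ?_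
    rintro α ⟨hα, hαm⟩
    obtain ⟨n, hαn, hnα⟩ := mem_iUnion.1 hα
    exact mem_iUnion.2 ⟨⟨n, Nat.lt_succ_of_le (hnα.trans hαm)⟩, hαn, hαm⟩

theorem exists_almost_superset (hε : ℵ₀ < ε.cof) (hΦ : CoherentFam ε Φ) {F : ℕ → Set Ordinal}
    (hF : ∀ n, F n ∈ walkIdeal Φ ε) : ∃ b ∈ walkIdeal Φ ε, ∀ n, (F n \ b).Finite := by
  choose hFε hFc β hβ hFβ hdiv using hF
  obtain ⟨B, hB, hβB⟩ := exists_ub_of_countable_of_aleph0_lt_cof hε (countable_range β)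
    (range_subset_iff.2 hβ)
  have hdivB : ∀ n, ESetDiverges Φ B (F n) := fun n =>
    ESetDiverges.raise hΦ (hβB _ (mem_range_self n)) hB (hFβ n) (hdiv n)
  refine ⟨_, iUnion_sep_mem hB hFε hFc (fun n x hx => (hFβ n x hx).trans (hβB _ ⟨n, rfl⟩))
    hdivB, fun n => (hdivB n n).subset fun α ⟨hαn, hαb⟩ => ⟨hαn, ?_⟩⟩
  by_contra! h
  exact hαb (mem_iUnion.2 ⟨n, hαn, h.le⟩)

end walkIdeal

theorem statement16_general (ε : Ordinal) (hε : Cardinal.aleph0 < Ordinal.cof ε)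
    (A : Type*) (Φ : Ordinal → Ordinal → A) (hΦ : CoherentFam ε Φ) :
    (∀ b ∈ walkIdeal Φ ε, b.Countable ∧ b ⊆ Set.Iio ε) ∧
    (∀ b : Set Ordinal, b ⊆ Set.Iio ε → b.Finite → b ∈ walkIdeal Φ ε) ∧
    (∀ b ∈ walkIdeal Φ ε, ∀ c, c ⊆ b → c ∈ walkIdeal Φ ε) ∧
    (∀ b ∈ walkIdeal Φ ε, ∀ c ∈ walkIdeal Φ ε, b ∪ c ∈ walkIdeal Φ ε) ∧
    (∀ F : ℕ → Set Ordinal, (∀ n, F n ∈ walkIdeal Φ ε) →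
      ∃ b ∈ walkIdeal Φ ε, ∀ n, (F n \ b).Finite) :=
  ⟨fun _ hb => ⟨hb.2.1, hb.1⟩, fun _ => walkIdeal.mem_of_finite hε,
    fun _ hb _ => walkIdeal.mem_of_subset hb, fun _ hb _ => walkIdeal.union_mem hΦ hb,
    fun _ => walkIdeal.exists_almost_superset hε hΦ⟩

/-- Claim: for `ε` of uncountable cofinality and a coherent family `Φ` of `A`-valued
functions of height `ε`, the collection `ℐ = walkIdeal Φ ε` is a P-ideal of countable
subsets of `ε`. -/
theorem statement16 (ε : Ordinal) (hε : Cardinal.aleph0 < Ordinal.cof ε)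
    (A : Type*) [AddCommGroup A] (Φ : Ordinal → Ordinal → A) (hΦ : CoherentFam ε Φ) :
    (∀ b ∈ walkIdeal Φ ε, b.Countable ∧ b ⊆ Set.Iio ε) ∧
    (∀ b : Set Ordinal, b ⊆ Set.Iio ε → b.Finite → b ∈ walkIdeal Φ ε) ∧
    (∀ b ∈ walkIdeal Φ ε, ∀ c, c ⊆ b → c ∈ walkIdeal Φ ε) ∧
    (∀ b ∈ walkIdeal Φ ε, ∀ c ∈ walkIdeal Φ ε, b ∪ c ∈ walkIdeal Φ ε) ∧
    (∀ F : ℕ → Set Ordinal, (∀ n, F n ∈ walkIdeal Φ ε) →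
      ∃ b ∈ walkIdeal Φ ε, ∀ n, (F n \ b).Finite) :=
  statement16_general ε hε A Φ hΦ
end
end

section
/- Suppose λ is a regular uncountable cardinal and □(λ) holds. Then for every nontrivial abelian group A there exists a nontrivial coherent family {φ_α : α → A | α < λ}. -/
noncomputable section
open Ordinal Set

/-- `D` is closed and unbounded (club) in the ordinal `L`. -/
def IsClubIn (D : Set Ordinal.{0}) (L : Ordinal.{0}) : Prop :=
  D ⊆ Set.Iio L ∧ (∀ α, α < L → 0 < α → sSup (D ∩ Set.Iio α) = α → α ∈ D) ∧
    ∀ α, α < L → ∃ β ∈ D, α ≤ β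

/-- `S` is a stationary subset of the ordinal `L`. -/
def IsStationaryIn (S : Set Ordinal.{0}) (L : Ordinal.{0}) : Prop :=
  S ⊆ Set.Iio L ∧ ∀ D, IsClubIn D L → (S ∩ D).Nonempty

/-- `C` is a `□(L)`-sequence: `C α` is club in `α` for limit `α < L`, the sequence is
coherent (`C β ∩ α = C α` whenever `α` is a limit point of `C β`), and there is no single
club `D ⊆ L` threading it (`D ∩ α = C α` for every limit point `α < L` of `D`). -/
def IsSquareSeq (L : Ordinal.{0}) (C : Ordinal.{0} → Set Ordinal.{0}) : Prop :=
  (∀ α, α < L → Order.IsSuccLimit α → IsClubIn (C α) α) ∧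
  (∀ α β, α < β → β < L → Order.IsSuccLimit α → Order.IsSuccLimit β →
    sSup (C β ∩ Set.Iio α) = α → C β ∩ Set.Iio α = C α) ∧
  ¬∃ D : Set Ordinal, IsClubIn D L ∧
    ∀ α, α < L → Order.IsSuccLimit α → sSup (D ∩ Set.Iio α) = α → D ∩ Set.Iio α = C α

/-!
Following Todorcevic, walk along the square sequence `C`. For a limit `δ`, the set
`walkSet C δ ⊆ δ` is, on each interval of the complement of `C δ`, the set `walkSet C ν` for the
next point `ν` of `C δ` with a single point flipped; that point lies in the `ω`-block of the
start `b` of the interval and codes `b` together with the length of the walk from `ν` down to `b`.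
When `α` is an accumulation point of `C β`, coherence of `C` gives `walkSet C β ∩ α = walkSet C α`;
otherwise an induction on `β` shows that the two sets still differ only finitely below `α`, and
the walk-length codes force them to differ somewhere above `C β ∩ α`. If some `X` almost agreed
with every `walkSet C β`, Fodor's lemma would give unboundedly many pairwise coherent `C β`,
whose union threads `C`. The family is `walkSet C β` scaled by some `a ≠ 0` in `A`.
-/

namespace SquareCoherence

open Order

def modOmega (b : Ordinal) : ℕ :=
  (lt_omega0.1 (mod_lt b omega0_ne_zero)).choose

lemma natCast_modOmega (b : Ordinal) : (modOmega b : Ordinal) = b % ω :=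
  (lt_omega0.1 (mod_lt b omega0_ne_zero)).choose_spec.symm

/-- A point of the `ω`-block of `b`, at or above `b`, coding the pair `(b, K)`. -/
def codePoint (b : Ordinal) (K : ℕ) : Ordinal :=
  ω * (b / ω) + Nat.pair (modOmega b) K

lemma codePoint_div (b : Ordinal) (K : ℕ) : codePoint b K / ω = b / ω := by
  rw [codePoint, mul_add_div _ omega0_ne_zero, div_eq_zero_of_lt (natCast_lt_omega0 _), add_zero]

lemma codePoint_mod (b : Ordinal) (K : ℕ) : codePoint b K % ω = Nat.pair (modOmega b) K := by
  rw [codePoint, mul_add_mod_self, mod_eq_of_lt (natCast_lt_omega0 _)]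

lemma codePoint_inj {b b' : Ordinal} {K K' : ℕ} (h : codePoint b K = codePoint b' K') :
    b = b' ∧ K = K' := by
  have hmod := congrArg (· % ω) h
  simp only [codePoint_mod, Nat.cast_inj, Nat.pair_eq_pair] at hmod
  refine ⟨?_, hmod.2⟩
  rw [← div_add_mod b ω, ← div_add_mod b' ω, ← natCast_modOmega, ← natCast_modOmega, hmod.1,
    ← codePoint_div b K, h, codePoint_div]

lemma le_codePoint (b : Ordinal) (K : ℕ) : b ≤ codePoint b K := by
  conv_lhs => rw [← div_add_mod b ω, ← natCast_modOmega]
  exact add_le_add_right (by exact_mod_cast Nat.left_le_pair _ _) _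

lemma codePoint_lt {b α : Ordinal} (hα : IsSuccLimit α) (hb : b < α) (K : ℕ) :
    codePoint b K < α :=
  hα.add_natCast_lt ((mul_div_le b ω).trans_lt hb) _

def nextPt (D : Set Ordinal) (ξ : Ordinal) : Ordinal := sInf (D \ Iio ξ)

/-- The start of the interval of the complement of `D` containing `ξ`, when `ξ ∉ D`. -/
def blockStart (D : Set Ordinal) (ξ : Ordinal) : Ordinal := sSup (D ∩ Iio ξ) + 1

section Points

variable {D : Set Ordinal} {ξ α y : Ordinal}

lemma nextPt_le (hy : y ∈ D) (hξy : ξ ≤ y) : nextPt D ξ ≤ y :=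
  csInf_le' ⟨hy, not_lt.2 hξy⟩

lemma lt_blockStart (hy : y ∈ D) (hyξ : y < ξ) : y < blockStart D ξ :=
  Order.lt_add_one_iff.2 (le_csSup (bddAbove_Iio.mono inter_subset_right) ⟨hy, hyξ⟩)

lemma notMem_of_blockStart_le (hξ₀ : blockStart D α ≤ ξ) (hξ : ξ < α) : ξ ∉ D :=
  fun h ↦ (lt_blockStart h hξ).not_ge hξ₀

lemma inter_Iio_eq_of_blockStart_le (hξ₀ : blockStart D α ≤ ξ) (hξ : ξ ≤ α) :
    D ∩ Iio ξ = D ∩ Iio α := by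
  ext y
  exact ⟨fun ⟨hy, hyξ⟩ ↦ ⟨hy, hyξ.trans_le hξ⟩,
    fun ⟨hy, hyα⟩ ↦ ⟨hy, (lt_blockStart hy hyα).trans_le hξ₀⟩⟩

lemma blockStart_eq_of_blockStart_le (hξ₀ : blockStart D α ≤ ξ) (hξ : ξ ≤ α) :
    blockStart D ξ = blockStart D α := by
  rw [blockStart, inter_Iio_eq_of_blockStart_le hξ₀ hξ, blockStart]

lemma nextPt_eq_of_blockStart_le (hξ₀ : blockStart D α ≤ ξ) (hξ : ξ ≤ α) :
    nextPt D ξ = nextPt D α := by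
  rw [nextPt, ← sdiff_inter_self_eq_sdiff, inter_comm, inter_Iio_eq_of_blockStart_le hξ₀ hξ,
    inter_comm, sdiff_inter_self_eq_sdiff, nextPt]

lemma blockStart_lt (hα : IsSuccLimit α) (hacc : sSup (D ∩ Iio α) ≠ α) : blockStart D α < α :=
  hα.add_one_lt ((csSup_le' fun _ hy ↦ hy.2.le).lt_of_ne hacc)

lemma exists_mem_between_of_acc (hacc : sSup (D ∩ Iio α) = α) (hξ : ξ < α) :
    ∃ y ∈ D, ξ < y ∧ y < α := by
  obtain ⟨y, ⟨hy, hyα⟩, hξy⟩ := exists_lt_of_lt_csSup' (hacc ▸ hξ)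
  exact ⟨y, hy, hξy, hyα⟩

end Points

section Club

variable {D : Set Ordinal.{0}} {δ ξ : Ordinal.{0}}

lemma nextPt_mem_of_isClubIn (hD : IsClubIn D δ) (hξ : ξ < δ) :
    nextPt D ξ ∈ D ∧ ξ ≤ nextPt D ξ := by
  obtain ⟨y, hy, hξy⟩ := hD.2.2 ξ hξ
  obtain ⟨h, h'⟩ := csInf_mem (s := D \ Iio ξ) ⟨y, hy, not_lt.2 hξy⟩
  exact ⟨h, not_lt.1 h'⟩

lemma nextPt_lt_of_isClubIn (hD : IsClubIn D δ) (hξ : ξ < δ) : nextPt D ξ < δ :=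
  hD.1 (nextPt_mem_of_isClubIn hD hξ).1

lemma exists_mem_forall_lt_of_finite (hD : IsClubIn D δ) (hδ : IsSuccLimit δ) {s : Set Ordinal}
    (hs : s.Finite) (hsδ : s ⊆ Iio δ) : ∃ z ∈ D, ∀ ξ ∈ s, ξ < z := by
  have hsup : sSup s < δ := by
    rcases s.eq_empty_or_nonempty with rfl | hne
    · simpa using hδ.bot_lt
    · exact hsδ (hne.csSup_mem hs)
  obtain ⟨z, hz, hsz⟩ := hD.2.2 _ (hδ.add_one_lt hsup)
  exact ⟨z, hz, fun ξ hξ ↦ (lt_add_one_iff.2 (le_csSup hs.bddAbove hξ)).trans_le hsz⟩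

end Club

section Regular

open scoped Cardinal

variable {κ : Cardinal} (hκ : κ.IsRegular) (hunc : ℵ₀ < κ)
include hκ hunc

lemma exists_isSuccLimit_closed (g : Ordinal → Ordinal) (hg : ∀ y < κ.ord, g y < κ.ord) :
    ∃ s < κ.ord, IsSuccLimit s ∧ ∀ y < s, g y < s := by
  have hL : IsSuccLimit κ.ord := Cardinal.isSuccLimit_ord hκ.aleph0_le
  have hbound : ∀ y < κ.ord, sSup ((g · + 1) '' Iio (y + 1)) < κ.ord := by
    intro y hy
    apply sSup_lt_of_lt_cof
    · calc #((g · + 1) '' Iio (y + 1)) ≤ #(Iio (y + 1)) := Cardinal.mk_image_le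
        _ = Cardinal.lift (y + 1).card := Cardinal.mk_Iio_ordinal _
        _ < (Ordinal.lift κ.ord).cof := by
          rw [← lift_cof, hκ.cof_ord, Cardinal.lift_lt, ← Cardinal.lt_ord]
          exact hL.add_one_lt hy
    · rintro _ ⟨z, hz, rfl⟩
      exact hL.add_one_lt (hg z ((lt_add_one_iff.1 hz).trans_lt hy))
  set h : Ordinal → Ordinal := fun y ↦ max (y + 1) (sSup ((g · + 1) '' Iio (y + 1)))
  have hh : ∀ y, y < h y := fun y ↦ (lt_add_one y).trans_le (le_max_left _ _)
  have hgh : ∀ {y z}, z ≤ y → g z < h y := by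
    intro y z hz
    have hmem : g z + 1 ∈ (g · + 1) '' Iio (y + 1) := ⟨z, lt_add_one_iff.2 hz, rfl⟩
    exact (lt_add_one _).trans_le ((le_csSup bddAbove_of_small hmem).trans (le_max_right _ _))
  have hiter : ∀ {y}, y < nfp h 0 → ∃ t, y < t ∧ h t ≤ nfp h 0 := by
    intro y hy
    obtain ⟨n, hn⟩ := lt_nfp_iff.1 hy
    refine ⟨h^[n] 0, hn, ?_⟩
    rw [← Function.iterate_succ_apply' h n 0]
    exact iterate_le_nfp h 0 (n + 1)
  refine ⟨nfp h 0, nfp_lt_ord (by rwa [hκ.cof_ord]) (fun y hy ↦ max_lt (hL.add_one_lt hy)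
    (hbound y hy)) hL.bot_lt, isSuccLimit_iff.2 ⟨?_, isSuccPrelimit_of_succ_lt fun y hy ↦ ?_⟩,
    fun y hy ↦ ?_⟩
  · exact ((hh 0).trans_le (iterate_le_nfp h 0 1)).ne'
  · obtain ⟨t, hyt, ht⟩ := hiter hy
    exact (succ_le_of_lt hyt).trans_lt ((hh t).trans_le ht)
  · obtain ⟨t, hyt, ht⟩ := hiter hy
    exact (hgh hyt.le).trans_le ht

/-- Fodor's lemma on the limit ordinals below `κ`. -/
theorem exists_unbounded_fiber (F : Ordinal → Ordinal)
    (hF : ∀ β < κ.ord, IsSuccLimit β → F β < β) :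
    ∃ ν, ∀ x < κ.ord, ∃ β, x < β ∧ β < κ.ord ∧ IsSuccLimit β ∧ F β = ν := by
  by_contra! hbdd
  choose x hxL hx using hbdd
  obtain ⟨s, hsL, hs, hclosed⟩ := exists_isSuccLimit_closed hκ hunc x fun ν _ ↦ hxL ν
  exact hx (F s) s (hclosed _ (hF s hsL hs)) hsL hs rfl

end Regular

open scoped Classical in
def ladder (C : Ordinal → Set Ordinal) (ν : Ordinal) : Set Ordinal :=
  if IsSuccLimit ν then C ν else {ν.pred}

/-- Todorcevic's `ρ₂(b, ν)`: the number of steps of the walk from `ν` down to `b`. -/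
def walkLength (C : Ordinal → Set Ordinal) (b : Ordinal) : Ordinal → ℕ :=
  wellFounded_lt.fix fun ν rec ↦
    if h : nextPt (ladder C ν) b < ν then rec _ h + 1 else 0

section Walk

variable {C : Ordinal → Set Ordinal} {b ν σ : Ordinal}

lemma walkLength_of_lt (h : nextPt (ladder C ν) b < ν) :
    walkLength C b ν = walkLength C b (nextPt (ladder C ν) b) + 1 := by
  rw [walkLength, WellFounded.fix_eq, dif_pos h]

lemma walkLength_of_isSuccLimit (hν : IsSuccLimit ν) (h : nextPt (C ν) b < ν) :
    walkLength C b ν = walkLength C b (nextPt (C ν) b) + 1 := by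
  have hlad : ladder C ν = C ν := if_pos hν
  rw [← hlad] at h ⊢
  exact walkLength_of_lt h

lemma walkLength_add_one (hb : b ≤ σ) : walkLength C b (σ + 1) = walkLength C b σ + 1 := by
  have hstep : nextPt (ladder C (σ + 1)) b = σ := by
    rw [ladder, if_neg (not_isSuccLimit_add_one σ), pred_add_one, nextPt,
      sdiff_eq_self_iff_disjoint.2 (by simpa using hb), csInf_singleton]
  rw [walkLength_of_lt (by rw [hstep]; exact lt_add_one σ), hstep]

end Walk

def disagreeBelow (S T : Set Ordinal) (α : Ordinal) : Set Ordinal :=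
  {ξ | ξ < α ∧ ¬(ξ ∈ S ↔ ξ ∈ T)}

lemma ne_of_mem_disagreeBelow {S T : Set Ordinal} {α ξ : Ordinal}
    (h : ξ ∈ disagreeBelow S T α) : S ≠ T := by
  rintro rfl
  exact h.2 Iff.rfl

/-- The point of the interval of `ξ` at which `walkSet C δ` differs from
`walkSet C (nextPt (C δ) ξ)`; it codes the start of the interval and the length of the walk
from `nextPt (C δ) ξ` down to it. -/
def flipPoint (C : Ordinal → Set Ordinal) (δ ξ : Ordinal) : Ordinal :=
  codePoint (blockStart (C δ) ξ) (walkLength C (blockStart (C δ) ξ) (nextPt (C δ) ξ))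

open scoped Classical in
/-- The condition `nextPt (C δ) ξ < δ`, automatic when `C δ` is club in `δ`, is what makes the
recursion well founded. -/
def walkSet (C : Ordinal → Set Ordinal) : Ordinal → Set Ordinal :=
  wellFounded_lt.fix fun δ rec ↦
    if IsSuccLimit δ then
      {ξ | ξ < δ ∧ ξ ∉ C δ ∧ ∃ h : nextPt (C δ) ξ < δ, (ξ ∈ rec _ h ↔ ξ ≠ flipPoint C δ ξ)}
    else if h : δ.pred < δ then rec _ h else ∅

section WalkSet

variable {C : Ordinal → Set Ordinal} {δ ξ : Ordinal}

lemma walkSet_add_one (σ : Ordinal) : walkSet C (σ + 1) = walkSet C σ := by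
  have hpred : (σ + 1).pred < σ + 1 := by rw [pred_add_one]; exact lt_add_one σ
  rw [walkSet, WellFounded.fix_eq, if_neg (not_isSuccLimit_add_one σ), dif_pos hpred]
  exact congrArg (walkSet C) (pred_add_one σ)

lemma mem_walkSet_iff (hδ : IsSuccLimit δ) (hξ : ξ < δ) (hn : nextPt (C δ) ξ < δ) :
    ξ ∈ walkSet C δ ↔ ξ ∉ C δ ∧ (ξ ∈ walkSet C (nextPt (C δ) ξ) ↔ ξ ≠ flipPoint C δ ξ) := by
  conv_lhs => rw [walkSet, WellFounded.fix_eq, if_pos hδ]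
  exact ⟨fun ⟨_, hC, _, h⟩ ↦ ⟨hC, h⟩, fun ⟨hC, h⟩ ↦ ⟨hξ, hC, hn, h⟩⟩

end WalkSet

section Square

variable {L : Ordinal.{0}} {C : Ordinal.{0} → Set Ordinal.{0}}
  (hcl : ∀ α, α < L → IsSuccLimit α → IsClubIn (C α) α)
  (hcoh : ∀ α β, α < β → β < L → IsSuccLimit α → IsSuccLimit β →
    sSup (C β ∩ Iio α) = α → C β ∩ Iio α = C α)
  {α β : Ordinal.{0}}

include hcl

lemma mem_walkSet_iff_of_isClubIn (hβL : β < L) (hβ : IsSuccLimit β) {ξ : Ordinal} (hξ : ξ < β) :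
    ξ ∈ walkSet C β ↔ ξ ∉ C β ∧ (ξ ∈ walkSet C (nextPt (C β) ξ) ↔ ξ ≠ flipPoint C β ξ) :=
  mem_walkSet_iff hβ hξ (nextPt_lt_of_isClubIn (hcl β hβL hβ) hξ)

lemma mem_walkSet_iff_of_blockStart_le (hβL : β < L) (hβ : IsSuccLimit β) (hαβ : α < β)
    {ξ : Ordinal} (hξ₀ : blockStart (C β) α ≤ ξ) (hξ : ξ < α) :
    ξ ∈ walkSet C β ↔ (ξ ∈ walkSet C (nextPt (C β) α) ↔ ξ ≠ flipPoint C β α) := by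
  have hflip : flipPoint C β ξ = flipPoint C β α := by
    rw [flipPoint, flipPoint, blockStart_eq_of_blockStart_le hξ₀ hξ.le,
      nextPt_eq_of_blockStart_le hξ₀ hξ.le]
  rw [mem_walkSet_iff_of_isClubIn hcl hβL hβ (hξ.trans hαβ), nextPt_eq_of_blockStart_le hξ₀ hξ.le,
    hflip, and_iff_right (notMem_of_blockStart_le hξ₀ hξ)]

lemma walkLength_eq_of_blockStart_le (hβL : β < L) (hβ : IsSuccLimit β) (hαβ : α < β)
    {b : Ordinal} (hb₀ : blockStart (C β) α ≤ b) (hb : b ≤ α) :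
    walkLength C b β = walkLength C b (nextPt (C β) α) + 1 := by
  rw [← nextPt_eq_of_blockStart_le hb₀ hb]
  exact walkLength_of_isSuccLimit hβ (nextPt_lt_of_isClubIn (hcl β hβL hβ) (hb.trans_lt hαβ))

include hcoh in
lemma mem_walkSet_iff_of_acc (hβL : β < L) (hβ : IsSuccLimit β) (hα : IsSuccLimit α)
    (hαβ : α < β) (hacc : sSup (C β ∩ Iio α) = α) {ξ : Ordinal} (hξ : ξ < α) :
    ξ ∈ walkSet C β ↔ ξ ∈ walkSet C α := by
  have hCα : C β ∩ Iio α = C α := hcoh α β hαβ hβL hα hβ hacc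
  have hclα := hcl α (hαβ.trans hβL) hα
  obtain ⟨y, hy, hξy, hyα⟩ := exists_mem_between_of_acc hacc hξ
  have hnextβ := nextPt_mem_of_isClubIn (hcl β hβL hβ) (hξ.trans hαβ)
  have hnextα := nextPt_mem_of_isClubIn hclα hξ
  have hnext_lt : nextPt (C β) ξ < α := (nextPt_le hy hξy.le).trans_lt hyα
  have hnext : nextPt (C β) ξ = nextPt (C α) ξ := by
    refine le_antisymm (nextPt_le ?_ hnextα.2) (nextPt_le ?_ hnextβ.2)
    · exact (hCα ▸ hnextα.1 : nextPt (C α) ξ ∈ C β ∩ Iio α).1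
    · exact hCα ▸ ⟨hnextβ.1, hnext_lt⟩
  have hblock : C β ∩ Iio ξ = C α ∩ Iio ξ := by
    rw [← hCα, inter_assoc, Iio_inter_Iio, min_eq_right hξ.le]
  have hflip : flipPoint C β ξ = flipPoint C α ξ := by
    rw [flipPoint, flipPoint, blockStart, blockStart, hblock, hnext]
  have hmem : ξ ∈ C β ↔ ξ ∈ C α := by
    rw [← hCα]; exact ⟨fun h ↦ ⟨h, hξ⟩, fun h ↦ h.1⟩
  rw [mem_walkSet_iff_of_isClubIn hcl hβL hβ (hξ.trans hαβ),
    mem_walkSet_iff_of_isClubIn hcl (hαβ.trans hβL) hα hξ, hnext, hflip, hmem]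

/-- Below `α`, `walkSet C β` agrees with `walkSet C η` (`η = sup (C β ∩ α)`) and hence with
`walkSet C α` up to finitely many points, and on `(η, α)` it agrees with `walkSet C ν`
(`ν = nextPt (C β) α`) except at the flip point, hence again with `walkSet C α`. -/
lemma finite_disagreeBelow_of_not_acc (hβL : β < L) (hβ : IsSuccLimit β) (hαβ : α < β)
    (hacc : sSup (C β ∩ Iio α) ≠ α)
    (IHβ : ∀ γ < β, ∀ α' ≤ γ, (disagreeBelow (walkSet C γ) (walkSet C α') α').Finite)
    (IHα : ∀ α' < α, (disagreeBelow (walkSet C β) (walkSet C α') α').Finite) :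
    (disagreeBelow (walkSet C β) (walkSet C α) α).Finite := by
  set η := sSup (C β ∩ Iio α)
  set ν := nextPt (C β) α
  have hηα : η < α := (csSup_le' fun _ hy ↦ hy.2.le).lt_of_ne hacc
  have hαν : α ≤ ν := (nextPt_mem_of_isClubIn (hcl β hβL hβ) hαβ).2
  have hνβ : ν < β := nextPt_lt_of_isClubIn (hcl β hβL hβ) hαβ
  refine (((IHα η hηα).union (IHβ α hαβ η hηα.le)).union
    ((IHβ ν hνβ α hαν).union (toFinite {η, flipPoint C β α}))).subset ?_
  rintro ξ ⟨hξα, hξ⟩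
  rcases lt_trichotomy ξ η with hξη | rfl | hηξ
  · by_cases hβη : ξ ∈ walkSet C β ↔ ξ ∈ walkSet C η
    · exact Or.inl (Or.inr ⟨hξη, fun hαη ↦ hξ (hβη.trans hαη.symm)⟩)
    · exact Or.inl (Or.inl ⟨hξη, hβη⟩)
  · exact Or.inr (Or.inr (Or.inl rfl))
  · by_cases hflip : ξ = flipPoint C β α
    · exact Or.inr (Or.inr (Or.inr hflip))
    have hblock := mem_walkSet_iff_of_blockStart_le hcl hβL hβ hαβ (add_one_le_of_lt hηξ) hξα
    rw [iff_true_right hflip] at hblock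
    exact Or.inr (Or.inl ⟨hξα, fun hνα ↦ hξ (hblock.trans hνα)⟩)

include hcoh in
theorem finite_disagreeBelow_walkSet (hβL : β < L) (hαβ : α ≤ β) :
    (disagreeBelow (walkSet C β) (walkSet C α) α).Finite := by
  induction β using WellFoundedLT.induction generalizing α with | _ β IHβ
  rw [le_iff_eq_or_lt] at hαβ
  rcases hαβ with rfl | hαβ
  · simp [disagreeBelow]
  rcases zero_or_succ_or_isSuccLimit β with rfl | ⟨σ, rfl⟩ | hβ
  · simp at hαβ
  · rw [succ_eq_add_one, walkSet_add_one]
    exact IHβ σ (lt_succ σ) ((lt_succ σ).trans hβL) (lt_succ_iff.1 hαβ)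
  induction α using WellFoundedLT.induction with | _ α IHα
  rcases zero_or_succ_or_isSuccLimit α with rfl | ⟨τ, rfl⟩ | hα
  · simp [disagreeBelow]
  · refine ((IHα τ (lt_succ τ) ((lt_succ τ).trans hαβ)).union (finite_singleton τ)).subset ?_
    rintro ξ ⟨hξ, hdis⟩
    rw [succ_eq_add_one, walkSet_add_one] at hdis
    rcases (lt_succ_iff.1 hξ).lt_or_eq with hξτ | rfl
    exacts [Or.inl ⟨hξτ, hdis⟩, Or.inr rfl]
  by_cases hacc : sSup (C β ∩ Iio α) = α
  · exact finite_empty.subset fun ξ ⟨hξ, hdis⟩ ↦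
      hdis (mem_walkSet_iff_of_acc hcl hcoh hβL hβ hα hαβ hacc hξ)
  exact finite_disagreeBelow_of_not_acc hcl hβL hβ hαβ hacc
    (fun γ hγ α' hα' ↦ IHβ γ hγ (hγ.trans hβL) hα')
    (fun α' hα' ↦ IHα α' hα' (hα'.trans hαβ))

/-- The code of a walk from `ν` shorter than `walkLength C b ν` is never the flip point. -/
lemma mem_disagreeBelow_of_walkLength_lt (hβL : β < L) (hβ : IsSuccLimit β) (hαβ : α < β)
    {b : Ordinal} {K : ℕ} (hb₀ : blockStart (C β) α ≤ b)
    (hK : K < walkLength C b (nextPt (C β) α))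
    (hdis : codePoint b K ∈ disagreeBelow (walkSet C (nextPt (C β) α)) (walkSet C α) α) :
    codePoint b K ∈ disagreeBelow (walkSet C β) (walkSet C α) α ∧ K < walkLength C b β := by
  have hbα : b ≤ α := (le_codePoint b K).trans hdis.1.le
  have hne : codePoint b K ≠ flipPoint C β α := by
    intro he
    obtain ⟨rfl, rfl⟩ := codePoint_inj he
    exact hK.false
  have hblock := mem_walkSet_iff_of_blockStart_le hcl hβL hβ hαβ
    (hb₀.trans (le_codePoint b K)) hdis.1
  rw [iff_true_right hne] at hblock
  refine ⟨⟨hdis.1, fun h ↦ hdis.2 (hblock.symm.trans h)⟩, ?_⟩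
  rw [walkLength_eq_of_blockStart_le hcl hβL hβ hαβ hb₀ hbα]
  exact hK.trans (lt_add_one _)

lemma flipPoint_mem_disagreeBelow_iff (hβL : β < L) (hβ : IsSuccLimit β) (hα : IsSuccLimit α)
    (hαβ : α < β) (hacc : sSup (C β ∩ Iio α) ≠ α) :
    flipPoint C β α ∈ disagreeBelow (walkSet C β) (walkSet C α) α ↔
      flipPoint C β α ∉ disagreeBelow (walkSet C (nextPt (C β) α)) (walkSet C α) α := by
  have hlt : flipPoint C β α < α := codePoint_lt hα (blockStart_lt hα hacc) _
  have hblock := mem_walkSet_iff_of_blockStart_le (ξ := flipPoint C β α) hcl hβL hβ hαβ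
    (le_codePoint _ _) hlt
  simp only [ne_eq, not_true_eq_false, iff_false] at hblock
  simp only [disagreeBelow, mem_ofPred_eq, hlt, true_and, hblock]
  tauto

lemma exists_disagreement_codePoint_of_not_acc (hβL : β < L) (hβ : IsSuccLimit β)
    (hα : IsSuccLimit α) (hαβ : α < β) (hacc : sSup (C β ∩ Iio α) ≠ α)
    (IH : α < nextPt (C β) α → ∀ b b' K, b ≤ b' →
      codePoint b' K ∈ disagreeBelow (walkSet C (nextPt (C β) α)) (walkSet C α) α →
      ∃ b'' K', b ≤ b'' ∧ K' < walkLength C b'' (nextPt (C β) α) ∧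
        codePoint b'' K' ∈ disagreeBelow (walkSet C (nextPt (C β) α)) (walkSet C α) α)
    {b b' : Ordinal} {K : ℕ} (hbb' : b ≤ b')
    (hdis : codePoint b' K ∈ disagreeBelow (walkSet C β) (walkSet C α) α) :
    ∃ b'' K', b ≤ b'' ∧ K' < walkLength C b'' β ∧
      codePoint b'' K' ∈ disagreeBelow (walkSet C β) (walkSet C α) α := by
  set b₀ := blockStart (C β) α
  set ν := nextPt (C β) α
  have hαν : α ≤ ν := (nextPt_mem_of_isClubIn (hcl β hβL hβ) hαβ).2
  have hfrom_ν : ∀ b' K, max b b₀ ≤ b' →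
      codePoint b' K ∈ disagreeBelow (walkSet C ν) (walkSet C α) α →
      ∃ b'' K', b ≤ b'' ∧ K' < walkLength C b'' β ∧
        codePoint b'' K' ∈ disagreeBelow (walkSet C β) (walkSet C α) α := by
    intro b' K hb' hdisν
    have hαν' : α < ν := hαν.lt_of_ne fun h ↦ ne_of_mem_disagreeBelow hdisν (by rw [h])
    obtain ⟨b'', K', hb'', hK', hdis''⟩ := IH hαν' _ b' K hb' hdisν
    obtain ⟨hdisβ, hKβ⟩ := mem_disagreeBelow_of_walkLength_lt hcl hβL hβ hαβ
      ((le_max_right _ _).trans hb'') hK' hdis''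
    exact ⟨b'', K', (le_max_left _ _).trans hb'', hKβ, hdisβ⟩
  by_cases hb : b ≤ b₀
  · by_cases hν : flipPoint C β α ∈ disagreeBelow (walkSet C ν) (walkSet C α) α
    · exact hfrom_ν b₀ _ (max_le hb le_rfl) hν
    refine ⟨b₀, walkLength C b₀ ν, hb, ?_,
      (flipPoint_mem_disagreeBelow_iff hcl hβL hβ hα hαβ hacc).2 hν⟩
    rw [walkLength_eq_of_blockStart_le hcl hβL hβ hαβ le_rfl (blockStart_lt hα hacc).le]
    exact lt_add_one _
  · have hb₀b' : b₀ < b' := (not_le.1 hb).trans_le hbb'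
    have hne : codePoint b' K ≠ flipPoint C β α := fun he ↦ hb₀b'.ne' (codePoint_inj he).1
    have hblock := mem_walkSet_iff_of_blockStart_le hcl hβL hβ hαβ
      (hb₀b'.le.trans (le_codePoint b' K)) hdis.1
    rw [iff_true_right hne] at hblock
    exact hfrom_ν b' K (max_le hbb' hb₀b'.le) ⟨hdis.1, fun h ↦ hdis.2 (hblock.trans h)⟩

include hcoh in
theorem exists_disagreement_codePoint (hβL : β < L) (hα : IsSuccLimit α) (hαβ : α < β)
    {b b' : Ordinal} {K : ℕ} (hbb' : b ≤ b')
    (hdis : codePoint b' K ∈ disagreeBelow (walkSet C β) (walkSet C α) α) :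
    ∃ b'' K', b ≤ b'' ∧ K' < walkLength C b'' β ∧
      codePoint b'' K' ∈ disagreeBelow (walkSet C β) (walkSet C α) α := by
  induction β using WellFoundedLT.induction generalizing b b' K with | _ β IH
  rcases zero_or_succ_or_isSuccLimit β with rfl | ⟨σ, rfl⟩ | hβ
  · simp at hαβ
  · rw [succ_eq_add_one, walkSet_add_one] at hdis ⊢
    rcases (lt_succ_iff.1 hαβ).eq_or_lt with rfl | hασ
    · exact absurd rfl (ne_of_mem_disagreeBelow hdis)
    obtain ⟨b'', K', hb'', hK', hdis'⟩ :=
      IH σ (lt_succ σ) ((lt_succ σ).trans hβL) hασ hbb' hdis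
    have hb''σ : b'' ≤ σ := ((le_codePoint b'' K').trans_lt (hdis'.1.trans hασ)).le
    refine ⟨b'', K', hb'', ?_, hdis'⟩
    rw [walkLength_add_one hb''σ]
    exact hK'.trans (lt_add_one _)
  by_cases hacc : sSup (C β ∩ Iio α) = α
  · exact absurd (mem_walkSet_iff_of_acc hcl hcoh hβL hβ hα hαβ hacc hdis.1) hdis.2
  have hνβ := nextPt_lt_of_isClubIn (hcl β hβL hβ) hαβ
  exact exists_disagreement_codePoint_of_not_acc hcl hβL hβ hα hαβ hacc
    (fun hαν _ _ _ ↦ IH _ hνβ (hνβ.trans hβL) hαν) hbb' hdis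

include hcoh in
/-- The flip point is a disagreement unless `walkSet C ν` and `walkSet C α` already disagree
there; then `exists_disagreement_codePoint` yields a disagreement coding a shorter walk. -/
theorem exists_disagreement_above_of_not_acc (hβL : β < L) (hβ : IsSuccLimit β)
    (hα : IsSuccLimit α) (hαβ : α < β) (hacc : sSup (C β ∩ Iio α) ≠ α) :
    ∃ p ∈ disagreeBelow (walkSet C β) (walkSet C α) α, ∀ y ∈ C β, y < α → y < p := by
  set ν := nextPt (C β) α
  suffices ∃ b K, blockStart (C β) α ≤ b ∧
      codePoint b K ∈ disagreeBelow (walkSet C β) (walkSet C α) α by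
    obtain ⟨b, K, hb, hdis⟩ := this
    exact ⟨_, hdis, fun y hy hyα ↦ (lt_blockStart hy hyα).trans_le (hb.trans (le_codePoint b K))⟩
  by_cases hν : flipPoint C β α ∈ disagreeBelow (walkSet C ν) (walkSet C α) α
  · have hνβ := nextPt_lt_of_isClubIn (hcl β hβL hβ) hαβ
    have hαν : α < ν := ((nextPt_mem_of_isClubIn (hcl β hβL hβ) hαβ).2).lt_of_ne
      fun h ↦ ne_of_mem_disagreeBelow hν (by rw [h])
    obtain ⟨b, K, hb, hK, hdis⟩ :=
      exists_disagreement_codePoint hcl hcoh (hνβ.trans hβL) hα hαν le_rfl hν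
    exact ⟨b, K, hb, (mem_disagreeBelow_of_walkLength_lt hcl hβL hβ hαβ hb hK hdis).1⟩
  · exact ⟨_, _, le_rfl, (flipPoint_mem_disagreeBelow_iff hcl hβL hβ hα hαβ hacc).2 hν⟩

include hcoh in
theorem exists_thread_of_unbounded {R : Set Ordinal.{0}}
    (hR : ∀ β ∈ R, β < L ∧ IsSuccLimit β) (hunb : ∀ x < L, ∃ β ∈ R, x < β)
    (hpair : ∀ α ∈ R, ∀ β ∈ R, α < β → C β ∩ Iio α = C α) :
    ∃ D, IsClubIn D L ∧
      ∀ α, α < L → IsSuccLimit α → sSup (D ∩ Iio α) = α → D ∩ Iio α = C α := by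
  set D := ⋃ β ∈ R, C β
  have htrace : ∀ β ∈ R, ∀ x ≤ β, D ∩ Iio x = C β ∩ Iio x := by
    intro β hβ x hxβ
    refine Subset.antisymm ?_ fun y ⟨hy, hyx⟩ ↦ ⟨mem_biUnion hβ hy, hyx⟩
    rintro y ⟨hy, hyx⟩
    obtain ⟨β', hβ', hy⟩ := mem_iUnion₂.1 hy
    refine ⟨?_, hyx⟩
    rcases lt_trichotomy β' β with hlt | rfl | hgt
    · exact (hpair β' hβ' β hβ hlt ▸ hy : y ∈ C β ∩ Iio β').1
    · exact hy
    · exact hpair β hβ β' hβ' hgt ▸ ⟨hy, hyx.trans_le hxβ⟩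
  have hacc : ∀ α, α < L → sSup (D ∩ Iio α) = α → ∃ β ∈ R, α < β ∧ sSup (C β ∩ Iio α) = α :=
    fun α hα hsup ↦
      let ⟨β, hβ, hαβ⟩ := hunb α hα
      ⟨β, hβ, hαβ, htrace β hβ α hαβ.le ▸ hsup⟩
  refine ⟨D, ⟨?_, fun α hα hα0 hsup ↦ ?_, fun x hx ↦ ?_⟩, fun α hα hαlim hsup ↦ ?_⟩
  · intro y hy
    obtain ⟨β, hβ, hy⟩ := mem_iUnion₂.1 hy
    exact ((hcl β (hR β hβ).1 (hR β hβ).2).1 hy).trans (hR β hβ).1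
  · obtain ⟨β, hβ, hαβ, hsupβ⟩ := hacc α hα hsup
    exact mem_biUnion hβ ((hcl β (hR β hβ).1 (hR β hβ).2).2.1 α hαβ hα0 hsupβ)
  · obtain ⟨β, hβ, hxβ⟩ := hunb x hx
    obtain ⟨y, hy, hxy⟩ := (hcl β (hR β hβ).1 (hR β hβ).2).2.2 x hxβ
    exact ⟨y, mem_biUnion hβ hy, hxy⟩
  · obtain ⟨β, hβ, hαβ, hsupβ⟩ := hacc α hα hsup
    rw [htrace β hβ α hαβ.le]
    exact hcoh α β hαβ (hR β hβ).1 hαlim (hR β hβ).2 hsupβ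

end Square

/-- A set `X` almost agreeing with every `walkSet C β` yields a thread: by Fodor's lemma, the
first point of `C β` above the disagreements of `X` and `walkSet C β` is constant on an unbounded
set of `β`, and any two of these are coherent since otherwise `walkSet C β` and `walkSet C α`
would disagree above that point. -/
theorem exists_thread_of_finite_disagreeBelow {κ : Cardinal} (hκ : κ.IsRegular)
    (hunc : Cardinal.aleph0 < κ) {C : Ordinal.{0} → Set Ordinal.{0}}
    (hcl : ∀ α, α < κ.ord → IsSuccLimit α → IsClubIn (C α) α)
    (hcoh : ∀ α β, α < β → β < κ.ord → IsSuccLimit α → IsSuccLimit β →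
      sSup (C β ∩ Iio α) = α → C β ∩ Iio α = C α)
    {X : Set Ordinal} (hX : ∀ β < κ.ord, (disagreeBelow X (walkSet C β) β).Finite) :
    ∃ D, IsClubIn D κ.ord ∧
      ∀ α, α < κ.ord → IsSuccLimit α → sSup (D ∩ Iio α) = α → D ∩ Iio α = C α := by
  have hbound : ∀ β < κ.ord, IsSuccLimit β →
      ∃ z ∈ C β, ∀ ξ ∈ disagreeBelow X (walkSet C β) β, ξ < z :=
    fun β hβL hβ ↦ exists_mem_forall_lt_of_finite (hcl β hβL hβ) hβ (hX β hβL) fun _ h ↦ h.1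
  choose! ρ hρC hρ using hbound
  obtain ⟨ν, hν⟩ := exists_unbounded_fiber hκ hunc ρ
    fun β hβL hβ ↦ (hcl β hβL hβ).1 (hρC β hβL hβ)
  refine exists_thread_of_unbounded hcl hcoh (R := {β | β < κ.ord ∧ IsSuccLimit β ∧ ρ β = ν})
    (fun β hβ ↦ ⟨hβ.1, hβ.2.1⟩) (fun x hx ↦ ?_) ?_
  · obtain ⟨β, hxβ, hβL, hβ, hρβ⟩ := hν x hx
    exact ⟨β, ⟨hβL, hβ, hρβ⟩, hxβ⟩
  rintro α ⟨hαL, hα, rfl⟩ β ⟨hβL, hβ, hρβ⟩ hαβ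
  refine hcoh α β hαβ hβL hα hβ (by_contra fun hacc ↦ ?_)
  obtain ⟨p, ⟨hpα, hdis⟩, hpC⟩ :=
    exists_disagreement_above_of_not_acc hcl hcoh hβL hβ hα hαβ hacc
  have hρp : ρ α < p := hpC _ (hρβ ▸ hρC β hβL hβ) ((hcl α hαL hα).1 (hρC α hαL hα))
  by_cases hXβ : p ∈ X ↔ p ∈ walkSet C β
  · exact (hρ α hαL hα p ⟨hpα, fun hXα ↦ hdis (hXβ.symm.trans hXα)⟩).not_gt hρp
  · exact (hρ β hβL hβ p ⟨hpα.trans hαβ, hXβ⟩).not_gt (hρβ ▸ hρp)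

end SquareCoherence

open SquareCoherence

/-- Theorem (Todorcevic): if `λ` is a regular uncountable cardinal and `□(λ)` holds, then
for every nontrivial abelian group `A` there is a nontrivial coherent family of `A`-valued
functions of height `λ`. -/
theorem statement18 (lam : Cardinal) (hreg : lam.IsRegular) (hunc : Cardinal.aleph0 < lam)
    (hsq : ∃ C : Ordinal → Set Ordinal, IsSquareSeq lam.ord C)
    (A : Type*) [AddCommGroup A] (hA : ∃ a : A, a ≠ 0) :
    ∃ Φ : Ordinal → Ordinal → A, CoherentFam lam.ord Φ ∧ ¬TrivialFam lam.ord Φ := by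
  classical
  obtain ⟨C, hcl, hcoh, hnothread⟩ := hsq
  obtain ⟨a, ha⟩ := hA
  refine ⟨fun β ξ ↦ if ξ ∈ walkSet C β then a else 0, fun β γ hβγ hγL ↦ ?_, ?_⟩
  · refine (finite_disagreeBelow_walkSet hcl hcoh hγL hβγ).subset fun ξ ⟨hξ, hne⟩ ↦ ⟨hξ, ?_⟩
    exact fun h ↦ hne (by simp only [h])
  · rintro ⟨f, hf⟩
    refine hnothread (exists_thread_of_finite_disagreeBelow hreg hunc hcl hcoh
      (X := {ξ | f ξ = a}) fun β hβ ↦ (hf β hβ).subset fun ξ ⟨hξ, hdis⟩ ↦ ⟨hξ, fun h ↦ hdis ?_⟩)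
    by_cases hξ : ξ ∈ walkSet C β <;> simp_all
end
end
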